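/- arXiv:math/0501277 — 2 statements merged into one kernel-verified Lean document; each statement's English description precedes it below -/
import Mathlib

section
/- Additivity of upper envelopes under concatenation: let A ∈ (ℝⁿ)^{N+1} and B ∈ (ℝⁿ)^{M+1} with weights τ ∈ ℝ^{N+1} and σ ∈ ℝ^{M+1}. Let (A+B, τ⊕σ) be the family of all sums (a_i + b_j) with weights (τ_i + σ_j), for 0 ≤ i ≤ N, 0 ≤ j ≤ M. Then ϑ_{A+B, τ⊕σ} = ϑ_{A,τ} ⊞ ϑ_{B,σ} as functions on Q_A + Q_B. -/
open Set Pointwise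

/-- The polytope `Q_{A,τ}`: convex hull of the lifted points `(a_j, τ_j)` in `ℝⁿ × ℝ`. -/
noncomputable def liftedPolytope {n : ℕ} {ι : Type*} (A : ι → (Fin n → ℝ)) (τ : ι → ℝ) :
    Set ((Fin n → ℝ) × ℝ) :=
  convexHull ℝ (Set.range fun j => (A j, τ j))

/-- The upper envelope function `ϑ_{A,τ}` over `Q_A = conv{a_j}`. -/
noncomputable def upperEnv {n : ℕ} {ι : Type*} (A : ι → (Fin n → ℝ)) (τ : ι → ℝ) :
    (Fin n → ℝ) → ℝ :=
  fun x => sSup {y : ℝ | (x, y) ∈ liftedPolytope A τ}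

/-- Sup-convolution `f ⊞ g` of two functions with respect to domains `Q`, `R`. -/
noncomputable def supConv {n : ℕ} (Q R : Set (Fin n → ℝ)) (f g : (Fin n → ℝ) → ℝ) :
    (Fin n → ℝ) → ℝ :=
  fun x => sSup {v | ∃ y ∈ Q, ∃ z ∈ R, y + z = x ∧ v = f y + g z}

/-!
The lifted polytope of the family `(a_i + b_j, τ_i + σ_j)` is the Minkowski sum of the lifted
polytopes of `(A, τ)` and `(B, σ)`, and `ϑ` reads off the top of a lifted polytope above each
point. Hence a point `(y, ϑ_A y) + (z, ϑ_B z)` lies in the sum polytope, giving `≥`; conversely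
the top point `(x, ϑ x)` of the sum polytope splits as `(y, u) + (z, w)` with `u ≤ ϑ_A y` and
`w ≤ ϑ_B z`, so the supremum defining `ϑ_A ⊞ ϑ_B` is attained and equals `ϑ x`.
-/

lemma Set.range_add_range {α β M : Type*} [Add M] (f : α → M) (g : β → M) :
    range f + range g = range fun p : α × β => f p.1 + g p.2 :=
  image2_range _ _ _

lemma IsCompact.prodMk_preimage {E : Type*} [TopologicalSpace E] [T2Space E]
    {K : Set (E × ℝ)} (hK : IsCompact K) (y : E) : IsCompact (Prod.mk y ⁻¹' K) :=
  (hK.image continuous_snd).of_isClosed_subset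
    (hK.isClosed.preimage (Continuous.prodMk_right y)) fun t ht => ⟨(y, t), ht, rfl⟩

section UpperEnv

variable {n : ℕ} {ι : Type*} (A : ι → (Fin n → ℝ)) (τ : ι → ℝ)

lemma image_fst_liftedPolytope :
    Prod.fst '' liftedPolytope A τ = convexHull ℝ (range A) := by
  have := (LinearMap.fst ℝ (Fin n → ℝ) ℝ).image_convexHull (range fun j => (A j, τ j))
  rwa [← range_comp] at this

lemma exists_mem_liftedPolytope {y : Fin n → ℝ} (hy : y ∈ convexHull ℝ (range A)) :
    ∃ t, (y, t) ∈ liftedPolytope A τ := by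
  rw [← image_fst_liftedPolytope A τ] at hy
  obtain ⟨⟨_, t⟩, hmem, rfl⟩ := hy
  exact ⟨t, hmem⟩

variable [Finite ι]

lemma isCompact_fiber_liftedPolytope (y : Fin n → ℝ) :
    IsCompact {t : ℝ | (y, t) ∈ liftedPolytope A τ} :=
  ((finite_range _).isCompact_convexHull ℝ).prodMk_preimage y

lemma le_upperEnv {y : Fin n → ℝ} {t : ℝ} (ht : (y, t) ∈ liftedPolytope A τ) :
    t ≤ upperEnv A τ y :=
  le_csSup (isCompact_fiber_liftedPolytope A τ y).bddAbove ht

lemma mk_upperEnv_mem_liftedPolytope {y : Fin n → ℝ} (hy : y ∈ convexHull ℝ (range A)) :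
    (y, upperEnv A τ y) ∈ liftedPolytope A τ :=
  (isCompact_fiber_liftedPolytope A τ y).sSup_mem (exists_mem_liftedPolytope A τ hy)

end UpperEnv

section Concat

variable {n : ℕ} {ι κ : Type*} (A : ι → (Fin n → ℝ)) (B : κ → (Fin n → ℝ))
  (τ : ι → ℝ) (σ : κ → ℝ)

lemma liftedPolytope_concat :
    liftedPolytope (fun p : ι × κ => A p.1 + B p.2) (fun p => τ p.1 + σ p.2)
      = liftedPolytope A τ + liftedPolytope B σ := by
  rw [liftedPolytope, liftedPolytope, liftedPolytope, ← convexHull_add, range_add_range]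
  rfl

variable [Finite ι] [Finite κ]

lemma upperEnv_add_le_upperEnv_concat {y z : Fin n → ℝ}
    (hy : y ∈ convexHull ℝ (range A)) (hz : z ∈ convexHull ℝ (range B)) :
    upperEnv A τ y + upperEnv B σ z
      ≤ upperEnv (fun p : ι × κ => A p.1 + B p.2) (fun p => τ p.1 + σ p.2) (y + z) := by
  refine le_upperEnv _ _ ?_
  rw [liftedPolytope_concat]
  exact add_mem_add (mk_upperEnv_mem_liftedPolytope A τ hy)
    (mk_upperEnv_mem_liftedPolytope B σ hz)

lemma exists_upperEnv_concat_eq_add {x : Fin n → ℝ}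
    (hx : x ∈ convexHull ℝ (range A) + convexHull ℝ (range B)) :
    ∃ y ∈ convexHull ℝ (range A), ∃ z ∈ convexHull ℝ (range B), y + z = x ∧
      upperEnv (fun p : ι × κ => A p.1 + B p.2) (fun p => τ p.1 + σ p.2) x
        = upperEnv A τ y + upperEnv B σ z := by
  have hxQ : x ∈ convexHull ℝ (range fun p : ι × κ => A p.1 + B p.2) := by
    rwa [← range_add_range, convexHull_add]
  have htop := mk_upperEnv_mem_liftedPolytope _ (fun p : ι × κ => τ p.1 + σ p.2) hxQ
  rw [liftedPolytope_concat] at htop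
  obtain ⟨⟨y, u⟩, hu, ⟨z, w⟩, hw, hsum⟩ := htop
  obtain ⟨rfl, hθ⟩ := Prod.ext_iff.mp hsum
  simp only [Prod.fst_add, Prod.snd_add] at hθ ⊢
  have hy : y ∈ convexHull ℝ (range A) := image_fst_liftedPolytope A τ ▸ ⟨_, hu, rfl⟩
  have hz : z ∈ convexHull ℝ (range B) := image_fst_liftedPolytope B σ ▸ ⟨_, hw, rfl⟩
  refine ⟨y, hy, z, hz, rfl, le_antisymm ?_ (upperEnv_add_le_upperEnv_concat A B τ σ hy hz)⟩
  rw [← hθ]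
  exact add_le_add (le_upperEnv A τ hu) (le_upperEnv B σ hw)

end Concat

theorem upperEnv_concat {n N M : ℕ}
    (A : Fin (N + 1) → (Fin n → ℝ)) (B : Fin (M + 1) → (Fin n → ℝ))
    (τ : Fin (N + 1) → ℝ) (σ : Fin (M + 1) → ℝ) :
    ∀ x ∈ convexHull ℝ (Set.range A) + convexHull ℝ (Set.range B),
      upperEnv (fun p : Fin (N + 1) × Fin (M + 1) => A p.1 + B p.2)
          (fun p => τ p.1 + σ p.2) x
        = supConv (convexHull ℝ (Set.range A)) (convexHull ℝ (Set.range B))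
            (upperEnv A τ) (upperEnv B σ) x := by
  intro x hx
  obtain ⟨y, hy, z, hz, hyz, hθ⟩ := exists_upperEnv_concat_eq_add A B τ σ hx
  refine (IsGreatest.csSup_eq ?_).symm
  refine ⟨⟨y, hy, z, hz, hyz, hθ⟩, ?_⟩
  rintro v ⟨y', hy', z', hz', rfl, rfl⟩
  exact upperEnv_add_le_upperEnv_concat A B τ σ hy' hz'
end

section
/- Diagonal value of the mixed integral: if f : Q → ℝ is a continuous concave function on a compact convex set Q ⊆ ℝⁿ, then MI(f, f, …, f) (with n+1 copies of f) equals (n+1)! · ∫_Q f(x) dx. -/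
open Set Pointwise MeasureTheory

/-- Iterated sup-convolution `⊞_{i ∈ S} f_i` of the functions `f i` with domains `Q i`. -/
noncomputable def multiConv {n : ℕ} {ι : Type*} [DecidableEq ι]
    (S : Finset ι) (Q : ι → Set (Fin n → ℝ)) (f : ι → (Fin n → ℝ) → ℝ) :
    (Fin n → ℝ) → ℝ :=
  fun x => sSup {v | ∃ y : ι → (Fin n → ℝ), (∀ i ∈ S, y i ∈ Q i) ∧
    ∑ i ∈ S, y i = x ∧ v = ∑ i ∈ S, f i (y i)}

/-- The mixed integral `MI(f_0, …, f_n)` of `n+1` concave functions on convex bodies in `ℝⁿ`. -/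
noncomputable def mixedIntegral (n : ℕ)
    (Q : Fin (n + 1) → Set (Fin n → ℝ)) (f : Fin (n + 1) → (Fin n → ℝ) → ℝ) : ℝ :=
  ∑ S ∈ Finset.univ.powerset.filter (fun S : Finset (Fin (n + 1)) => S.Nonempty),
    (-1 : ℝ) ^ (n + 1 - S.card) * ∫ x in (∑ i ∈ S, Q i), multiConv S Q f x


lemma neg_one_pow_sub (a b : ℕ) (h : b ≤ a) : ((-1:ℝ))^(a-b) = (-1)^a * (-1)^b := by
  have : ((-1:ℝ))^(a-b) * (-1)^b = (-1)^a := by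
    rw [← pow_add, Nat.sub_add_cancel h]
  calc ((-1:ℝ))^(a-b) = ((-1:ℝ))^(a-b) * ((-1)^b * (-1)^b) := by
        rw [← pow_add, ← two_mul, pow_mul]; simp
    _ = (-1)^a * (-1)^b := by rw [← mul_assoc, this]

lemma card_surj_fun (m : ℕ) :
    (Finset.univ.filter fun g : Fin m → Fin m => Function.Surjective g).card
      = Nat.factorial m := by
  rw [← Fintype.card_subtype]
  have e : {g : Fin m → Fin m // Function.Surjective g} ≃ Equiv.Perm (Fin m) :=
    { toFun := fun g => Equiv.ofBijective g.1 (Finite.surjective_iff_bijective.mp g.2)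
      invFun := fun e => ⟨e, e.surjective⟩
      left_inv := fun g => rfl
      right_inv := fun e => Equiv.ext fun x => rfl }
  rw [Fintype.card_congr e, Fintype.card_perm, Fintype.card_fin]

lemma comb_identity (m : ℕ) :
    ∑ S ∈ (Finset.univ : Finset (Fin m)).powerset,
      (-1:ℝ)^(m - S.card) * (S.card:ℝ)^m = Nat.factorial m := by
  have key : ∀ S : Finset (Fin m), (S.card:ℝ)^m
      = ∑ g ∈ (Finset.univ : Finset (Fin m → Fin m)), (if ∀ i, g i ∈ S then (1:ℝ) else 0) := by
    intro S
    rw [← Finset.sum_filter]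
    simp only [Finset.sum_const, nsmul_eq_mul, mul_one]
    have : (Finset.univ.filter fun g : Fin m → Fin m => ∀ i, g i ∈ S)
        = Fintype.piFinset (fun _ : Fin m => S) := by
      ext g; simp [Fintype.mem_piFinset]
    rw [this, Fintype.card_piFinset]
    push_cast
    simp
  calc ∑ S ∈ (Finset.univ : Finset (Fin m)).powerset, (-1:ℝ)^(m - S.card) * (S.card:ℝ)^m
      = ∑ S ∈ (Finset.univ : Finset (Fin m)).powerset,
          ∑ g ∈ (Finset.univ : Finset (Fin m → Fin m)),
            (if ∀ i, g i ∈ S then (-1:ℝ)^(m - S.card) else 0) := by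
        refine Finset.sum_congr rfl fun S _ => ?_
        rw [key S, Finset.mul_sum]
        refine Finset.sum_congr rfl fun g _ => ?_
        split <;> simp
    _ = ∑ g ∈ (Finset.univ : Finset (Fin m → Fin m)),
          ∑ S ∈ (Finset.univ : Finset (Fin m)).powerset,
            (if ∀ i, g i ∈ S then (-1:ℝ)^(m - S.card) else 0) := Finset.sum_comm
    _ = ∑ g ∈ (Finset.univ : Finset (Fin m → Fin m)),
          (if Function.Surjective g then (1:ℝ) else 0) := by
        refine Finset.sum_congr rfl fun g _ => ?_
        -- inner sum over S
        have himg : ∀ S : Finset (Fin m), (∀ i, g i ∈ S) ↔ Finset.image g Finset.univ ⊆ S := by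
          intro S; simp [Finset.image_subset_iff]
        set R := Finset.image g Finset.univ with hR
        have hsum : ∑ S ∈ (Finset.univ : Finset (Fin m)).powerset,
            (if ∀ i, g i ∈ S then (-1:ℝ)^(m - S.card) else 0)
            = ∑ T ∈ (Finset.univ \ R).powerset, (-1:ℝ)^(m - (R ∪ T).card) := by
          rw [← Finset.sum_filter]
          refine Finset.sum_nbij' (fun S => S \ R) (fun T => R ∪ T) ?_ ?_ ?_ ?_ ?_
          · intro S hS
            simp only [Finset.mem_filter, Finset.mem_powerset] at hS
            simp only [Finset.mem_powerset]
            exact Finset.sdiff_subset_sdiff (Finset.subset_univ S) le_rfl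
          · intro T hT
            simp only [Finset.mem_powerset] at hT
            simp only [Finset.mem_filter, Finset.mem_powerset]
            exact ⟨Finset.subset_univ _, fun i => Finset.mem_union_left _ (by simp [hR])⟩
          · intro S hS
            simp only [Finset.mem_filter, Finset.mem_powerset, himg] at hS
            show R ∪ (S \ R) = S
            rw [Finset.union_sdiff_of_subset hS.2]
          · intro T hT
            simp only [Finset.mem_powerset] at hT
            show (R ∪ T) \ R = T
            rw [Finset.union_sdiff_cancel_left
              (Finset.disjoint_left.mpr fun a ha hb => (Finset.mem_sdiff.mp (hT hb)).2 ha)]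
          · intro S hS
            simp only [Finset.mem_filter, Finset.mem_powerset, himg] at hS
            show (-1:ℝ)^(m - S.card) = (-1:ℝ)^(m - (R ∪ (S \ R)).card)
            rw [Finset.union_sdiff_of_subset hS.2]
        rw [hsum]
        have hcard : ∀ T ∈ (Finset.univ \ R).powerset,
            (-1:ℝ)^(m - (R ∪ T).card) = (-1)^((Finset.univ \ R).card) * (-1)^T.card := by
          intro T hT
          simp only [Finset.mem_powerset] at hT
          have hdisj : Disjoint R T :=
            Finset.disjoint_left.mpr fun a ha hb => (Finset.mem_sdiff.mp (hT hb)).2 ha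
          rw [Finset.card_union_of_disjoint hdisj]
          have h1 : (Finset.univ \ R).card = m - R.card := by
            rw [Finset.card_sdiff_of_subset (Finset.subset_univ R)]; simp
          have hTle : T.card ≤ (Finset.univ \ R).card := Finset.card_le_card hT
          have hRle : R.card ≤ m := by
            simpa using Finset.card_le_card (Finset.subset_univ R)
          have : m - (R.card + T.card) = (Finset.univ \ R).card - T.card := by omega
          rw [this, neg_one_pow_sub _ _ hTle]
        rw [Finset.sum_congr rfl hcard, ← Finset.mul_sum]
        have hz : ∑ T ∈ (Finset.univ \ R).powerset, ((-1:ℝ))^T.card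
            = if Finset.univ \ R = ∅ then 1 else 0 := by
          have := @Finset.sum_powerset_neg_one_pow_card (Fin m) _ (Finset.univ \ R)
          exact_mod_cast congrArg (Int.cast : ℤ → ℝ) this
        rw [hz]
        have hsurj : (Finset.univ \ R = ∅) ↔ Function.Surjective g := by
          rw [Finset.sdiff_eq_empty_iff_subset]
          constructor
          · intro h x
            have := h (Finset.mem_univ x)
            simp only [hR, Finset.mem_image] at this
            obtain ⟨y, _, hy⟩ := this; exact ⟨y, hy⟩
          · intro h x _
            obtain ⟨y, hy⟩ := h x
            simp only [hR, Finset.mem_image]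
            exact ⟨y, Finset.mem_univ y, hy⟩
        by_cases h : Function.Surjective g
        · simp [h, hsurj.mpr h, Finset.sdiff_eq_empty_iff_subset.mp (hsurj.mpr h)]
        · have hne : Finset.univ \ R ≠ ∅ := fun e => h (hsurj.mp e)
          simp only [hne, if_false, mul_zero, if_neg h]
    _ = Nat.factorial m := by
        rw [← Finset.sum_filter]
        simp [card_surj_fun m]

lemma sum_const_set {n : ℕ} {ι : Type*} [DecidableEq ι] (Q : Set (Fin n → ℝ))
    (hQ : Convex ℝ Q) (S : Finset ι) (hS : S.Nonempty) :
    ∑ _i ∈ S, Q = (S.card : ℝ) • Q := by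
  induction hS using Finset.Nonempty.cons_induction with
  | singleton a => simp
  | cons a s ha hs ih =>
    rw [Finset.sum_cons, ih, Finset.card_cons]
    have : ((s.card + 1 : ℕ) : ℝ) = 1 + (s.card : ℝ) := by push_cast; ring
    rw [this, hQ.add_smul zero_le_one (by positivity), one_smul]

lemma multiConv_diag_eq {n : ℕ} (Q : Set (Fin n → ℝ)) (f : (Fin n → ℝ) → ℝ)
    (hf : ConcaveOn ℝ Q f) (S : Finset (Fin (n+1))) (hS : S.Nonempty)
    {x : Fin n → ℝ} (hx : x ∈ (S.card : ℝ) • Q) :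
    multiConv S (fun _ => Q) (fun _ => f) x = (S.card : ℝ) * f ((S.card : ℝ)⁻¹ • x) := by
  obtain ⟨z, hz, rfl⟩ := hx
  have hk0 : (0:ℝ) < (S.card : ℝ) := by
    exact_mod_cast Finset.card_pos.mpr hS
  have hkne : (S.card : ℝ) ≠ 0 := hk0.ne'
  have hzx : (S.card : ℝ)⁻¹ • ((S.card : ℝ) • z) = z := by
    rw [smul_smul, inv_mul_cancel₀ hkne, one_smul]
  rw [hzx]
  apply IsGreatest.csSup_eq
  constructor
  · refine ⟨fun _ => z, fun i _ => hz, ?_, ?_⟩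
    · rw [Finset.sum_const, ← Nat.cast_smul_eq_nsmul ℝ]
    · rw [Finset.sum_const, nsmul_eq_mul]
  · rintro v ⟨y, hy, hsum, rfl⟩
    have hw : ∑ _i ∈ S, (S.card : ℝ)⁻¹ = 1 := by
      rw [Finset.sum_const, nsmul_eq_mul, mul_inv_cancel₀ hkne]
    have hj := hf.le_map_sum (t := S) (w := fun _ => (S.card : ℝ)⁻¹) (p := y)
      (fun i _ => by positivity) hw (fun i hi => hy i hi)
    have h1 : ∑ i ∈ S, (S.card : ℝ)⁻¹ • y i = (S.card : ℝ)⁻¹ • ((S.card : ℝ) • z) := by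
      rw [← Finset.smul_sum, hsum]
    rw [h1, hzx] at hj
    have h2 : ∑ i ∈ S, (S.card : ℝ)⁻¹ • f (y i) = (S.card : ℝ)⁻¹ * ∑ i ∈ S, f (y i) := by
      rw [← Finset.smul_sum]; rfl
    rw [h2] at hj
    calc ∑ i ∈ S, f (y i) = (S.card : ℝ) * ((S.card : ℝ)⁻¹ * ∑ i ∈ S, f (y i)) := by
          field_simp
      _ ≤ (S.card : ℝ) * f z := by
          exact mul_le_mul_of_nonneg_left hj hk0.le

lemma integral_scale {n : ℕ} (Q : Set (Fin n → ℝ)) (f : (Fin n → ℝ) → ℝ)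
    (k : ℕ) (hk : 0 < k) :
    ∫ x in ((k : ℝ) • Q), (k : ℝ) * f ((k : ℝ)⁻¹ • x)
      = (k : ℝ) ^ (n + 1) * ∫ x in Q, f x := by
  have hk0 : (0:ℝ) < (k : ℝ) := by exact_mod_cast hk
  have h := MeasureTheory.Measure.setIntegral_comp_smul_of_pos (μ := volume)
    (fun x => f ((k : ℝ)⁻¹ • x)) Q hk0
  simp only [smul_smul, inv_mul_cancel₀ hk0.ne', one_smul] at h
  have hrank : Module.finrank ℝ (Fin n → ℝ) = n := by simp
  rw [hrank, smul_eq_mul] at h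
  rw [MeasureTheory.integral_const_mul, h]
  field_simp
  ring

lemma term_eq {n : ℕ} (Q : Set (Fin n → ℝ)) (f : (Fin n → ℝ) → ℝ)
    (hQconv : Convex ℝ Q) (hQcomp : IsCompact Q) (hf : ConcaveOn ℝ Q f)
    (S : Finset (Fin (n+1))) (hS : S.Nonempty) :
    ∫ x in (∑ _i ∈ S, Q), multiConv S (fun _ => Q) (fun _ => f) x
      = (S.card : ℝ) ^ (n + 1) * ∫ x in Q, f x := by
  rw [sum_const_set Q hQconv S hS]
  have hmeas : MeasurableSet ((S.card : ℝ) • Q) :=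
    (hQcomp.smul ((S.card : ℝ))).measurableSet
  rw [MeasureTheory.setIntegral_congr_fun hmeas
    (fun x hx => multiConv_diag_eq Q f hf S hS hx)]
  exact integral_scale Q f S.card (Finset.card_pos.mpr hS)

theorem mixedIntegral_diag (n : ℕ)
    (Q : Set (Fin n → ℝ)) (f : (Fin n → ℝ) → ℝ)
    (hQconv : Convex ℝ Q) (hQcomp : IsCompact Q)
    (hf : ConcaveOn ℝ Q f) (hfc : ContinuousOn f Q) :
    mixedIntegral n (fun _ => Q) (fun _ => f)
      = (Nat.factorial (n + 1) : ℝ) * ∫ x in Q, f x := by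
  unfold mixedIntegral
  have hterm : ∀ S ∈ Finset.univ.powerset.filter
      (fun S : Finset (Fin (n + 1)) => S.Nonempty),
      (-1 : ℝ) ^ (n + 1 - S.card) * ∫ x in (∑ _i ∈ S, Q),
          multiConv S (fun _ => Q) (fun _ => f) x
        = ((-1 : ℝ) ^ (n + 1 - S.card) * (S.card : ℝ) ^ (n + 1)) * ∫ x in Q, f x := by
    intro S hS
    simp only [Finset.mem_filter] at hS
    rw [term_eq Q f hQconv hQcomp hf S hS.2, mul_assoc]
  rw [Finset.sum_congr rfl hterm, ← Finset.sum_mul]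
  congr 1
  have hfull := comb_identity (n + 1)
  have hsplit : ∑ S ∈ (Finset.univ : Finset (Fin (n+1))).powerset,
      (-1:ℝ)^(n + 1 - S.card) * (S.card:ℝ)^(n+1)
      = ∑ S ∈ Finset.univ.powerset.filter (fun S : Finset (Fin (n + 1)) => S.Nonempty),
          (-1:ℝ)^(n + 1 - S.card) * (S.card:ℝ)^(n+1) := by
    rw [← Finset.sum_filter_add_sum_filter_not _
      (fun S : Finset (Fin (n + 1)) => S.Nonempty)]
    have h0 : (Finset.univ.powerset.filter
        (fun S : Finset (Fin (n + 1)) => ¬S.Nonempty)) = {∅} := by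
      ext T; simp [Finset.not_nonempty_iff_eq_empty]
    rw [h0]
    simp
  rw [← hsplit, hfull]
end
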